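/- arXiv:math/0610065 — 2 statements merged into one kernel-verified Lean document; each statement's English description precedes it below -/
import Mathlib

section
/- Suppose r is strictly plurisubharmonic at 0. Then there exists an open neighborhood V ⊆ U of 0 such that for every z ∈ V with ρ(z) < 0 and every w ∈ V with r(w, conj z) = 0 (i.e. w ∈ Q_z ∩ V) one has ρ(w) ≥ −ρ(z) > 0; in particular Q_z ∩ V ⊆ U⁺. If in addition there are constants κ, K > 0 with κ·dist(ζ, M) ≤ |ρ(ζ)| ≤ K·dist(ζ, M) for all ζ ∈ V, then there is a constant c > 0 such that dist(w, M) ≥ c·dist(z, M) for every such z and w. -/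
/-!
For `z, w` near `0` the number `r(w, w̄) - r(w, z̄) - r(z, w̄) + r(z, z̄)` is a mixed second
difference of `r` at `(z, z̄)` in the directions `(w - z, 0)` and `(0, w̄ - z̄)`, hence equals the
Levi form `L(w - z)` up to an error that is small compared with `|w - z|²`; strict
plurisubharmonicity gives `Re L(w - z) ≥ λ |w - z|²`, so its real part is nonnegative. If
`r(w, z̄) = 0`, Hermitian symmetry gives `r(z, w̄) = 0` as well, and the inequality becomes
`ρ(w) + ρ(z) ≥ 0`. Comparability of `|ρ|` with the distance to `M` then yields the distance
estimate with `c = κ / K`.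

Since `r` is only known to be holomorphic, the second-order control comes from restricting to
complex lines: there Cauchy's estimate turns the uniform continuity of `r` into uniform control
of second derivatives.
-/

/-- Componentwise complex conjugation on `ℂⁿ`. -/
noncomputable def conjE {n : ℕ} (z : EuclideanSpace ℂ (Fin n)) :
    EuclideanSpace ℂ (Fin n) := WithLp.toLp 2 (fun i => (starRingEnd ℂ) (z i))

open Metric Filter Topology

section

variable {P F : Type*} [NormedAddCommGroup P] [NormedSpace ℂ P]
  [NormedAddCommGroup F] [NormedSpace ℂ F]

lemma hasDerivAt_comp_add_smul {f : P → F} {a b : P} {t : ℂ}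
    (hf : DifferentiableAt ℂ f (a + t • b)) :
    HasDerivAt (fun s : ℂ => f (a + s • b)) (fderiv ℂ f (a + t • b) b) t :=
  hf.hasFDerivAt.comp_hasDerivAt t (((hasDerivAt_id t).smul_const b).const_add a |>.congr_deriv
    (one_smul ℂ b))

lemma deriv_deriv_comp_add_smul_eq {f : P → F} {B : P →L[ℂ] P →L[ℂ] F} {a : P}
    (hf : ∀ᶠ x in 𝓝 a, DifferentiableAt ℂ f x) (hB : HasFDerivAt (fderiv ℂ f) B a) (b : P) :
    deriv (deriv fun s : ℂ => f (a + s • b)) 0 = B b b := by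
  have hline : Tendsto (fun s : ℂ => a + s • b) (𝓝 0) (𝓝 a) :=
    (continuous_const.add (continuous_id.smul continuous_const)).tendsto' _ _ (by simp)
  have hderiv : deriv (fun s : ℂ => f (a + s • b)) =ᶠ[𝓝 0]
      fun s => fderiv ℂ f (a + s • b) b := by
    filter_upwards [hline.eventually hf] with s hs
    exact (hasDerivAt_comp_add_smul hs).deriv
  rw [hderiv.deriv_eq]
  have hB' : HasFDerivAt (fderiv ℂ f) B (a + (0 : ℂ) • b) := by simpa using hB
  have hslope : HasDerivAt (fun s : ℂ => fderiv ℂ f (a + s • b)) (B b) 0 :=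
    hB'.comp_hasDerivAt 0 (((hasDerivAt_id (0 : ℂ)).smul_const b).const_add a |>.congr_deriv
      (one_smul ℂ b))
  exact ((ContinuousLinearMap.apply ℂ F b).hasFDerivAt.comp_hasDerivAt 0 hslope).deriv

lemma deriv_deriv_comp_add_smul_shift (f : P → F) (a b : P) (s : ℂ) :
    deriv (deriv fun t : ℂ => f (a + t • b)) s =
      deriv (deriv fun t : ℂ => f (a + s • b + t • b)) 0 := by
  have hshift : (fun t : ℂ => f (a + s • b + t • b)) = fun t => f (a + (s + t) • b) := by
    simp only [add_smul, add_assoc]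
  have hderiv : deriv (fun t : ℂ => f (a + (s + t) • b)) =
      fun x => deriv (fun t => f (a + t • b)) (s + x) :=
    funext fun x => deriv_comp_const_add (fun t => f (a + t • b)) s x
  rw [hshift, hderiv, deriv_comp_const_add, add_zero]

lemma analyticOnNhd_comp_add_smul [CompleteSpace F] {f : P → F} {U : Set P} (hU : IsOpen U)
    (hf : DifferentiableOn ℂ f U) (a b : P) :
    AnalyticOnNhd ℂ (fun s : ℂ => f (a + s • b)) {s | a + s • b ∈ U} :=
  (hf.comp (f := fun s : ℂ => a + s • b) (by fun_prop) fun _ hs => hs).analyticOnNhd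
    (hU.preimage (by fun_prop))

lemma norm_deriv_deriv_sub_le [CompleteSpace F] {g₁ g₂ : ℂ → F} {c : ℂ} {R C : ℝ} (hR : 0 < R)
    (h₁ : DifferentiableOn ℂ g₁ (closedBall c R)) (h₂ : DifferentiableOn ℂ g₂ (closedBall c R))
    (hC : ∀ z ∈ sphere c R, ‖g₁ z - g₂ z‖ ≤ C) :
    ‖deriv (deriv g₁) c - deriv (deriv g₂) c‖ ≤ 2 * C / R ^ 2 := by
  have ha₁ := (h₁.mono ball_subset_closedBall).analyticOnNhd isOpen_ball
  have ha₂ := (h₂.mono ball_subset_closedBall).analyticOnNhd isOpen_ball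
  have hc : c ∈ ball c R := mem_ball_self hR
  have hderiv : deriv (g₁ - g₂) =ᶠ[𝓝 c] deriv g₁ - deriv g₂ := by
    filter_upwards [isOpen_ball.mem_nhds hc] with z hz
    exact deriv_sub (ha₁ z hz).differentiableAt (ha₂ z hz).differentiableAt
  have hsecond : iteratedDeriv 2 (g₁ - g₂) c = deriv (deriv g₁) c - deriv (deriv g₂) c := by
    rw [iteratedDeriv_succ, iteratedDeriv_one, hderiv.deriv_eq]
    exact deriv_sub (ha₁.deriv c hc).differentiableAt (ha₂.deriv c hc).differentiableAt
  simpa [hsecond] using Complex.norm_iteratedDeriv_le_of_forall_mem_sphere_norm_le 2 hR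
    ((h₁.sub h₂).diffContOnCl_ball subset_rfl) hC

lemma exists_norm_deriv_deriv_comp_add_smul_sub_le [ProperSpace P] [CompleteSpace F] {f : P → F}
    {B : P →L[ℂ] P →L[ℂ] F} {ρ ε : ℝ} (hρ : 0 < ρ) (hf : DifferentiableOn ℂ f (ball 0 ρ))
    (hB : HasFDerivAt (fderiv ℂ f) B 0) (hε : 0 < ε) :
    ∃ η > 0, ∀ a b : P, ‖a‖ < η →
      ‖deriv (deriv fun s : ℂ => f (a + s • b)) 0 - B b b‖ ≤ ε * ‖b‖ ^ 2 := by
  obtain ⟨R, hR, hRρ⟩ : ∃ R, 0 < R ∧ 3 * R < ρ := ⟨ρ / 4, by positivity, by linarith⟩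
  obtain ⟨η, hη, hunif⟩ := Metric.uniformContinuousOn_iff.1
    ((isCompact_closedBall (0 : P) (3 * R)).uniformContinuousOn_of_continuous
      (hf.continuousOn.mono (closedBall_subset_ball hRρ))) (ε * R ^ 2 / 2)
      (by positivity)
  refine ⟨min η (2 * R), lt_min hη (by positivity), fun a b haη => ?_⟩
  rcases eq_or_ne b 0 with rfl | hb
  · simp
  have hb' : 0 < ‖b‖ := norm_pos_iff.2 hb
  have hline : ∀ c : P, ‖c‖ ≤ 2 * R → ∀ s ∈ closedBall (0 : ℂ) (R / ‖b‖),
      c + s • b ∈ closedBall (0 : P) (3 * R) := by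
    intro c hc s hs
    rw [mem_closedBall_zero_iff, le_div_iff₀ hb'] at hs
    rw [mem_closedBall_zero_iff]
    calc ‖c + s • b‖ ≤ ‖c‖ + ‖s‖ * ‖b‖ := (norm_add_le _ _).trans_eq (by rw [norm_smul])
      _ ≤ 3 * R := by linarith
  have hslice : ∀ c : P, ‖c‖ ≤ 2 * R →
      DifferentiableOn ℂ (fun s : ℂ => f (c + s • b)) (closedBall 0 (R / ‖b‖)) := fun c hc =>
    hf.comp (by fun_prop) fun s hs => closedBall_subset_ball hRρ (hline c hc s hs)
  have ha : ‖a‖ ≤ 2 * R := (haη.trans_le (min_le_right _ _)).le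
  have h0 : ‖(0 : P)‖ ≤ 2 * R := by simp [hR.le]
  have hcenter : deriv (deriv fun s : ℂ => f (0 + s • b)) 0 = B b b :=
    deriv_deriv_comp_add_smul_eq (eventually_of_mem (ball_mem_nhds 0 hρ) fun x hx =>
      (hf x hx).differentiableAt (isOpen_ball.mem_nhds hx)) hB b
  -- Compare the line through `a` with the parallel line through `0` on the circle where
  -- `‖s • b‖ = R`; along the latter the second derivative is exactly `B b b`.
  have hcauchy := norm_deriv_deriv_sub_le (div_pos hR hb') (hslice a ha) (hslice 0 h0)
    fun s hs => by
      rw [← dist_eq_norm]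
      refine (hunif _ (hline a ha s (sphere_subset_closedBall hs)) _
        (hline 0 h0 s (sphere_subset_closedBall hs)) ?_).le
      simpa [dist_eq_norm] using haη.trans_le (min_le_left _ _)
  rw [hcenter] at hcauchy
  calc _ ≤ 2 * (ε * R ^ 2 / 2) / (R / ‖b‖) ^ 2 := hcauchy
    _ = ε * ‖b‖ ^ 2 := by field_simp

lemma norm_sub_inv_two_smul_le_of_hasDerivAt {g g' g'' : ℂ → F} {C : F} {ε : ℝ}
    (hg : ∀ s ∈ closedBall (0 : ℂ) 1, HasDerivAt g (g' s) s)
    (hg' : ∀ s ∈ closedBall (0 : ℂ) 1, HasDerivAt g' (g'' s) s)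
    (h₀ : g 0 = 0) (h₀' : g' 0 = 0) (hg'' : ∀ s ∈ closedBall (0 : ℂ) 1, ‖g'' s - C‖ ≤ ε) :
    ‖g 1 - (2 : ℂ)⁻¹ • C‖ ≤ ε := by
  have hconv : Convex ℝ (closedBall (0 : ℂ) 1) := convex_closedBall 0 1
  have h0 : (0 : ℂ) ∈ closedBall (0 : ℂ) 1 := mem_closedBall_self zero_le_one
  have h1 : (1 : ℂ) ∈ closedBall (0 : ℂ) 1 := by simp
  have hε : 0 ≤ ε := (norm_nonneg _).trans (hg'' 0 h0)
  have hfirst : ∀ s ∈ closedBall (0 : ℂ) 1, ‖g' s - s • C‖ ≤ ε := by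
    intro s hs
    have hmv := hconv.norm_image_sub_le_of_norm_hasDerivWithin_le
      (f := fun s => g' s - s • C) (fun x hx => ((hg' x hx).sub
        ((hasDerivAt_id x).smul_const C |>.congr_deriv (one_smul ℂ C))).hasDerivWithinAt)
      hg'' h0 hs
    simp only [h₀', zero_smul, sub_zero] at hmv
    calc _ ≤ ε * ‖s‖ := hmv
      _ ≤ ε * 1 := by gcongr; exact mem_closedBall_zero_iff.1 hs
      _ = ε := mul_one ε
  have hmv := hconv.norm_image_sub_le_of_norm_hasDerivWithin_le
    (f := fun s => g s - ((2 : ℂ)⁻¹ * s ^ 2) • C) (fun x hx => ((hg x hx).sub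
      (((hasDerivAt_pow 2 x).const_mul (2 : ℂ)⁻¹).smul_const C)).hasDerivWithinAt)
    (fun x hx => by convert hfirst x hx using 4; push_cast; ring) h0 h1
  simpa [h₀] using hmv

lemma inv_two_smul_apply_add_add_sub_sub {B : P →L[ℂ] P →L[ℂ] F} (hB : ∀ x y, B x y = B y x)
    (u v : P) : (2 : ℂ)⁻¹ • (B (u + v) (u + v) - B u u - B v v) = B u v := by
  have h : B (u + v) (u + v) - B u u - B v v = (2 : ℂ) • B u v := by
    simp only [map_add, add_apply, hB v u, two_smul]; abel
  rw [h, inv_smul_smul₀ two_ne_zero]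

/-- `s ↦ f (a + s • (u + v)) - f (a + s • u) - f (a + s • v) + f a` vanishes to second order at
`0`, and its second derivative is a signed sum of second derivatives along three lines. -/
lemma norm_mixed_diff_sub_le_of_norm_deriv_deriv_sub_le [CompleteSpace F] {f : P → F}
    {B : P →L[ℂ] P →L[ℂ] F} (hB : ∀ x y, B x y = B y x) {a u v : P} {δ : ℝ}
    (hfa : DifferentiableAt ℂ f a)
    (hline : ∀ b : P, ‖b‖ ≤ ‖u‖ + ‖v‖ → ∀ s ∈ closedBall (0 : ℂ) 1,
      AnalyticAt ℂ (fun t : ℂ => f (a + t • b)) s)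
    (hdd : ∀ b : P, ‖b‖ ≤ ‖u‖ + ‖v‖ → ∀ s ∈ closedBall (0 : ℂ) 1,
      ‖deriv (deriv fun t : ℂ => f (a + t • b)) s - B b b‖ ≤ δ) :
    ‖f (a + u + v) - f (a + u) - f (a + v) + f a - B u v‖ ≤ 3 * δ := by
  set L : P → ℂ → F := fun b s => f (a + s • b) with hL
  have hd0 : ∀ b, deriv (L b) 0 = fderiv ℂ f a b := fun b => by
    simpa using (hasDerivAt_comp_add_smul (b := b) (t := 0) (by simpa using hfa)).deriv
  have hu : ‖u‖ ≤ ‖u‖ + ‖v‖ := le_add_of_nonneg_right (norm_nonneg v)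
  have hv : ‖v‖ ≤ ‖u‖ + ‖v‖ := le_add_of_nonneg_left (norm_nonneg u)
  have huv : ‖u + v‖ ≤ ‖u‖ + ‖v‖ := norm_add_le u v
  have key := norm_sub_inv_two_smul_le_of_hasDerivAt
    (g := fun s => L (u + v) s - L u s - L v s + f a)
    (g' := fun s => deriv (L (u + v)) s - deriv (L u) s - deriv (L v) s)
    (g'' := fun s => deriv (deriv (L (u + v))) s - deriv (deriv (L u)) s - deriv (deriv (L v)) s)
    (C := B (u + v) (u + v) - B u u - B v v) (ε := 3 * δ)
    (fun s hs => (((hline _ huv s hs).differentiableAt.hasDerivAt.sub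
      (hline _ hu s hs).differentiableAt.hasDerivAt).sub
      (hline _ hv s hs).differentiableAt.hasDerivAt).add_const _)
    (fun s hs => (((hline _ huv s hs).deriv.differentiableAt.hasDerivAt.sub
      (hline _ hu s hs).deriv.differentiableAt.hasDerivAt).sub
      (hline _ hv s hs).deriv.differentiableAt.hasDerivAt))
    (by simp [hL]) (by simp only [hd0, map_add]; abel)
    (fun s hs => calc
      _ = ‖(deriv (deriv (L (u + v))) s - B (u + v) (u + v)) - (deriv (deriv (L u)) s - B u u)
          - (deriv (deriv (L v)) s - B v v)‖ := by congr 1; abel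
      _ ≤ _ := (norm_sub_le _ _).trans (add_le_add_left (norm_sub_le _ _) _)
      _ ≤ _ := by linarith [hdd _ huv s hs, hdd _ hu s hs, hdd _ hv s hs])
  rw [inv_two_smul_apply_add_add_sub_sub hB] at key
  simpa [hL, add_assoc] using key

lemma exists_norm_mixed_diff_sub_le [ProperSpace P] [CompleteSpace F] {f : P → F}
    {B : P →L[ℂ] P →L[ℂ] F} {ρ ε : ℝ} (hρ : 0 < ρ) (hf : DifferentiableOn ℂ f (ball 0 ρ))
    (hB : HasFDerivAt (fderiv ℂ f) B 0) (hε : 0 < ε) :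
    ∃ η > 0, ∀ a u v : P, ‖a‖ + ‖u‖ + ‖v‖ < η →
      ‖f (a + u + v) - f (a + u) - f (a + v) + f a - B u v‖ ≤ ε * (‖u‖ + ‖v‖) ^ 2 := by
  obtain ⟨η, hη, hslice⟩ :=
    exists_norm_deriv_deriv_comp_add_smul_sub_le hρ hf hB (ε := ε / 3) (by positivity)
  have hf₀ : ∀ᶠ x in 𝓝 0, HasFDerivAt f (fderiv ℂ f x) x :=
    eventually_of_mem (ball_mem_nhds 0 hρ) fun x hx =>
      ((hf x hx).differentiableAt (isOpen_ball.mem_nhds hx)).hasFDerivAt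
  refine ⟨min η ρ, lt_min hη hρ, fun a u v hauv => ?_⟩
  have hmem : ∀ b : P, ‖b‖ ≤ ‖u‖ + ‖v‖ → ∀ s ∈ closedBall (0 : ℂ) 1,
      ‖a + s • b‖ < min η ρ := fun b hb s hs =>
    calc ‖a + s • b‖ ≤ ‖a‖ + ‖s‖ * ‖b‖ := (norm_add_le _ _).trans_eq (by rw [norm_smul])
      _ ≤ ‖a‖ + 1 * (‖u‖ + ‖v‖) := by gcongr; exact mem_closedBall_zero_iff.1 hs
      _ < min η ρ := by linarith
  have ha : a ∈ ball (0 : P) ρ :=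
    mem_ball_zero_iff.2 (by linarith [min_le_right η ρ, norm_nonneg u, norm_nonneg v])
  have key := norm_mixed_diff_sub_le_of_norm_deriv_deriv_sub_le (δ := ε / 3 * (‖u‖ + ‖v‖) ^ 2)
    (second_derivative_symmetric_of_eventually hf₀ hB)
    ((hf a ha).differentiableAt (isOpen_ball.mem_nhds ha))
    (fun b hb s hs => analyticOnNhd_comp_add_smul isOpen_ball hf a b s
      (mem_ball_zero_iff.2 ((hmem b hb s hs).trans_le (min_le_right _ _))))
    (fun b hb s hs => by
      rw [deriv_deriv_comp_add_smul_shift]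
      refine (hslice _ b ((hmem b hb s hs).trans_le (min_le_left _ _))).trans ?_
      gcongr)
  linarith

end

lemma exists_pos_mul_norm_sq_le {E : Type*} [NormedAddCommGroup E] [NormedSpace ℝ E]
    [ProperSpace E] {q : E → ℝ} (hq : Continuous q) (hhom : ∀ (t : ℝ) v, q (t • v) = t ^ 2 * q v)
    (hpos : ∀ v ≠ 0, 0 < q v) : ∃ c > 0, ∀ v, c * ‖v‖ ^ 2 ≤ q v := by
  have hq0 : q 0 = 0 := by simpa using hhom 0 0
  rcases subsingleton_or_nontrivial E with hE | hE
  · exact ⟨1, one_pos, fun v => by simp [Subsingleton.elim v 0, hq0]⟩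
  obtain ⟨v₀, hv₀, hmin⟩ := (isCompact_sphere (0 : E) 1).exists_isMinOn
    (NormedSpace.sphere_nonempty.2 zero_le_one) hq.continuousOn
  have hv₀ne : v₀ ≠ 0 := ne_zero_of_mem_unit_sphere ⟨v₀, hv₀⟩
  refine ⟨q v₀, hpos v₀ hv₀ne, fun v => ?_⟩
  rcases eq_or_ne v 0 with rfl | hv
  · simp [hq0]
  have hv' : 0 < ‖v‖ := norm_pos_iff.2 hv
  have hunit : ‖v‖⁻¹ • v ∈ sphere (0 : E) 1 := by
    simp [norm_smul, hv'.ne']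
  calc q v₀ * ‖v‖ ^ 2 ≤ q (‖v‖⁻¹ • v) * ‖v‖ ^ 2 := by gcongr; exact hmin hunit
    _ = q v := by rw [hhom]; field_simp

section

variable {n : ℕ}

noncomputable def conjLI (n : ℕ) :
    EuclideanSpace ℂ (Fin n) →ₗᵢ[ℝ] EuclideanSpace ℂ (Fin n) where
  toFun := conjE
  map_add' x y := by ext i; simp [conjE]
  map_smul' c x := by ext i; simp [conjE]
  norm_map' x := by simp [EuclideanSpace.norm_eq, conjE]

@[simp]
lemma conjE_conjE (z : EuclideanSpace ℂ (Fin n)) : conjE (conjE z) = z := by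
  ext i; simp [conjE]

@[simp]
lemma norm_conjE (z : EuclideanSpace ℂ (Fin n)) : ‖conjE z‖ = ‖z‖ :=
  (conjLI n).norm_map z

lemma conjE_sub (z w : EuclideanSpace ℂ (Fin n)) : conjE (z - w) = conjE z - conjE w :=
  (conjLI n).map_sub z w

lemma conjE_real_smul (t : ℝ) (z : EuclideanSpace ℂ (Fin n)) : conjE (t • z) = t • conjE z :=
  (conjLI n).map_smul t z

lemma exists_pos_mul_norm_sq_le_re_levi
    (B : EuclideanSpace ℂ (Fin n) × EuclideanSpace ℂ (Fin n) →L[ℂ]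
      EuclideanSpace ℂ (Fin n) × EuclideanSpace ℂ (Fin n) →L[ℂ] ℂ)
    (hB : ∀ v : EuclideanSpace ℂ (Fin n), v ≠ 0 → 0 < (B (v, 0) (0, conjE v)).re) :
    ∃ c > 0, ∀ v : EuclideanSpace ℂ (Fin n), c * ‖v‖ ^ 2 ≤ (B (v, 0) (0, conjE v)).re := by
  refine exists_pos_mul_norm_sq_le ?_ (fun t v => ?_) hB
  · have hconj : Continuous (conjE (n := n)) := (conjLI n).continuous
    fun_prop
  · have hu : ((t • v, 0) : EuclideanSpace ℂ (Fin n) × EuclideanSpace ℂ (Fin n)) =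
        (t : ℂ) • (v, 0) := by simp [Complex.coe_smul]
    have hv : ((0, conjE (t • v)) : EuclideanSpace ℂ (Fin n) × EuclideanSpace ℂ (Fin n)) =
        (t : ℂ) • (0, conjE v) := by
      simp [Complex.coe_smul, conjE_real_smul]
    rw [hu, hv, map_smul, map_smul, smul_apply, smul_eq_mul, smul_eq_mul,
      Complex.re_ofReal_mul, Complex.re_ofReal_mul]
    ring

lemma differentiableAt_fderiv_of_re_levi_pos
    {r : EuclideanSpace ℂ (Fin n) × EuclideanSpace ℂ (Fin n) → ℂ}
    (hpsh : ∀ v : EuclideanSpace ℂ (Fin n), v ≠ 0 →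
      0 < (fderiv ℂ (fderiv ℂ r) (0, 0) (v, 0) (0, conjE v)).re) :
    DifferentiableAt ℂ (fderiv ℂ r) (0, 0) := by
  by_contra hr
  -- otherwise the Levi form vanishes, so `ℂⁿ = 0` and every function on it is differentiable
  have : Subsingleton (EuclideanSpace ℂ (Fin n)) :=
    subsingleton_of_forall_eq 0 fun v => by
      by_contra hv
      simpa [fderiv_zero_of_not_differentiableAt hr] using hpsh v hv
  exact hr (differentiable_of_subsingleton _)

lemma exists_ball_re_mixed_diff_nonneg {U : Set (EuclideanSpace ℂ (Fin n))}
    (hU : IsOpen U) (h0U : (0 : EuclideanSpace ℂ (Fin n)) ∈ U)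
    {r : EuclideanSpace ℂ (Fin n) × EuclideanSpace ℂ (Fin n) → ℂ}
    (hr : DifferentiableOn ℂ r (U ×ˢ U))
    (hpsh : ∀ v : EuclideanSpace ℂ (Fin n), v ≠ 0 →
      0 < (fderiv ℂ (fderiv ℂ r) (0, 0) (v, 0) (0, conjE v)).re) :
    ∃ δ > 0, ball 0 δ ⊆ U ∧ ∀ z ∈ ball (0 : EuclideanSpace ℂ (Fin n)) δ, ∀ w ∈ ball 0 δ,
      0 ≤ (r (w, conjE w) - r (w, conjE z) - r (z, conjE w) + r (z, conjE z)).re := by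
  obtain ⟨ρ, hρ, hρU⟩ := Metric.isOpen_iff.1 (hU.prod hU) (0, 0) ⟨h0U, h0U⟩
  set B := fderiv ℂ (fderiv ℂ r) (0, 0)
  obtain ⟨c, hc, hcB⟩ := exists_pos_mul_norm_sq_le_re_levi B hpsh
  obtain ⟨η, hη, hmixed⟩ := exists_norm_mixed_diff_sub_le hρ (hr.mono hρU)
    (differentiableAt_fderiv_of_re_levi_pos hpsh).hasFDerivAt (ε := c / 4) (by positivity)
  refine ⟨min (η / 5) ρ, by positivity, fun z hz => ?_, fun z hz w hw => ?_⟩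
  · have hz : ‖z‖ < ρ := (mem_ball_zero_iff.1 hz).trans_le (min_le_right _ _)
    exact (hρU (show (z, z) ∈ ball 0 ρ by simpa [Prod.norm_def] using hz)).1
  rw [mem_ball_zero_iff, lt_min_iff] at hz hw
  set h := w - z
  have hh : ‖h‖ ≤ ‖w‖ + ‖z‖ := norm_sub_le w z
  have hest := hmixed (z, conjE z) (h, 0) (0, conjE h) (by
    simp only [Prod.norm_def, norm_conjE, norm_zero, max_self, max_eq_left (norm_nonneg _),
      max_eq_right (norm_nonneg _)]
    linarith)
  have hw' : z + h = w := add_sub_cancel z w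
  have hconj : conjE z + conjE h = conjE w := by rw [conjE_sub, add_sub_cancel]
  simp only [Prod.mk_add_mk, add_zero, hw', hconj, Prod.norm_def, norm_conjE, norm_zero,
    max_eq_left (norm_nonneg _), max_eq_right (norm_nonneg _)] at hest
  have hre := (Complex.abs_re_le_norm _).trans hest
  rw [abs_le, Complex.sub_re] at hre
  have hsq : c / 4 * (‖h‖ + ‖h‖) ^ 2 = c * ‖h‖ ^ 2 := by ring
  linarith [hre.1, hcB h]

end

theorem segre_variety_of_inner_point_in_plus_side_general
    (n : ℕ)
    (U : Set (EuclideanSpace ℂ (Fin n))) (hU : IsOpen U)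
    (h0U : (0 : EuclideanSpace ℂ (Fin n)) ∈ U)
    (r : EuclideanSpace ℂ (Fin n) × EuclideanSpace ℂ (Fin n) → ℂ)
    (hr : DifferentiableOn ℂ r (U ×ˢ U))
    (hherm : ∀ z ∈ U, ∀ ω ∈ U, r (z, ω) = (starRingEnd ℂ) (r (conjE ω, conjE z)))
    (hpsh : ∀ v : EuclideanSpace ℂ (Fin n), v ≠ 0 →
      0 < (fderiv ℂ (fderiv ℂ r) (0, 0) (v, 0) (0, conjE v)).re)
    (ρ : EuclideanSpace ℂ (Fin n) → ℝ) (hρ : ∀ z, ρ z = (r (z, conjE z)).re)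
    (M : Set (EuclideanSpace ℂ (Fin n))) :
    ∃ V : Set (EuclideanSpace ℂ (Fin n)), IsOpen V ∧
      (0 : EuclideanSpace ℂ (Fin n)) ∈ V ∧ V ⊆ U ∧
      (∀ z ∈ V, ρ z < 0 → ∀ w ∈ V, r (w, conjE z) = 0 →
        0 < -ρ z ∧ -ρ z ≤ ρ w) ∧
      (∀ κ K : ℝ, 0 < κ → 0 < K →
        (∀ ζ ∈ V, κ * Metric.infDist ζ M ≤ |ρ ζ| ∧ |ρ ζ| ≤ K * Metric.infDist ζ M) →
        ∃ c : ℝ, 0 < c ∧ ∀ z ∈ V, ρ z < 0 → ∀ w ∈ V, r (w, conjE z) = 0 →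
          c * Metric.infDist z M ≤ Metric.infDist w M) := by
  obtain ⟨δ, hδ, hδU, hmixed⟩ := exists_ball_re_mixed_diff_nonneg hU h0U hr hpsh
  have hplus : ∀ z ∈ ball 0 δ, ρ z < 0 → ∀ w ∈ ball 0 δ, r (w, conjE z) = 0 →
      0 < -ρ z ∧ -ρ z ≤ ρ w := by
    intro z hz hρz w hw hwz
    have hzw : r (z, conjE w) = 0 := by
      have hw' : conjE w ∈ ball (0 : EuclideanSpace ℂ (Fin n)) δ := by simpa using hw
      rw [hherm z (hδU hz) _ (hδU hw'), conjE_conjE, hwz, map_zero]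
    have h := hmixed z hz w hw
    rw [hwz, hzw, sub_zero, sub_zero, Complex.add_re, ← hρ, ← hρ] at h
    exact ⟨neg_pos.2 hρz, by linarith⟩
  refine ⟨ball 0 δ, isOpen_ball, mem_ball_self hδ, hδU, hplus,
    fun κ K hκ hK hcomp => ⟨κ / K, div_pos hκ hK, fun z hz hρz w hw hwz => ?_⟩⟩
  obtain ⟨hpos, hle⟩ := hplus z hz hρz w hw hwz
  rw [div_mul_eq_mul_div, div_le_iff₀ hK]
  calc κ * infDist z M ≤ |ρ z| := (hcomp z hz).1
    _ ≤ |ρ w| := by rw [abs_of_neg hρz, abs_of_pos (hpos.trans_le hle)]; exact hle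
    _ ≤ K * infDist w M := (hcomp w hw).2
    _ = infDist w M * K := mul_comm _ _

/-- near `0`, for `z` with `ρ(z) < 0`, the Segre variety `Q_z` lies
in `{ρ > 0}`, with the quantitative bound `ρ(w) ≥ -ρ(z) > 0`; and assuming the
comparability `|ρ| ∼ dist(·, M)` one gets `dist(w, M) ≥ c · dist(z, M)`. -/
theorem segre_variety_of_inner_point_in_plus_side
    (n : ℕ) (hn : 1 ≤ n)
    (U : Set (EuclideanSpace ℂ (Fin n))) (hU : IsOpen U)
    (h0U : (0 : EuclideanSpace ℂ (Fin n)) ∈ U)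
    (r : EuclideanSpace ℂ (Fin n) × EuclideanSpace ℂ (Fin n) → ℂ)
    (hr : DifferentiableOn ℂ r (U ×ˢ U))
    (hherm : ∀ z ∈ U, ∀ ω ∈ U, r (z, ω) = (starRingEnd ℂ) (r (conjE ω, conjE z)))
    (hpsh : ∀ v : EuclideanSpace ℂ (Fin n), v ≠ 0 →
      0 < (fderiv ℂ (fderiv ℂ r) (0, 0) (v, 0) (0, conjE v)).re)
    (ρ : EuclideanSpace ℂ (Fin n) → ℝ) (hρ : ∀ z, ρ z = (r (z, conjE z)).re)
    (M : Set (EuclideanSpace ℂ (Fin n))) (hM : M = {z ∈ U | ρ z = 0}) :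
    ∃ V : Set (EuclideanSpace ℂ (Fin n)), IsOpen V ∧
      (0 : EuclideanSpace ℂ (Fin n)) ∈ V ∧ V ⊆ U ∧
      (∀ z ∈ V, ρ z < 0 → ∀ w ∈ V, r (w, conjE z) = 0 →
        0 < -ρ z ∧ -ρ z ≤ ρ w) ∧
      (∀ κ K : ℝ, 0 < κ → 0 < K →
        (∀ ζ ∈ V, κ * Metric.infDist ζ M ≤ |ρ ζ| ∧ |ρ ζ| ≤ K * Metric.infDist ζ M) →
        ∃ c : ℝ, 0 < c ∧ ∀ z ∈ V, ρ z < 0 → ∀ w ∈ V, r (w, conjE z) = 0 →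
          c * Metric.infDist z M ≤ Metric.infDist w M) :=
  segre_variety_of_inner_point_in_plus_side_general n U hU h0U r hr hherm hpsh ρ hρ M
end

section
/- Let U' ⊆ ℂᴺ be open and let ρ' : U' → ℝ be twice continuously differentiable with positive-definite Levi form at every point: for every p ∈ U' and every nonzero v ∈ ℂᴺ, H_p(v,v) + H_p(i·v, i·v) > 0, where H_p is the second real Fréchet derivative (real Hessian bilinear form) of ρ' at p. Let D ⊆ ℂ be a nonempty connected open set and g : D → ℂᴺ a holomorphic map with g(D) ⊆ U' and ρ'(g(ζ)) = 0 for all ζ ∈ D. Then g is constant. (Equivalently: a strictly pseudoconvex hypersurface {ρ' = 0} contains no complex-analytic set of positive dimension.) -/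
/-!
If `ρ` vanishes along a holomorphic curve `g`, then so does the Laplacian
`∂²/∂x² + ∂²/∂y²` of `ρ ∘ g`. By the second-order chain rule, and because the complex
bilinearity of `g''` gives `g''(i, i) = -g''(1, 1)`, the terms in `g''` cancel and this
Laplacian is `H(g', g') + H(i g', i g')`, the Levi form of `ρ` at `g'` (up to a factor 4).
Strict plurisubharmonicity then forces `g' = 0` on `D`, so `g` is constant on the connected
set `D`.
-/

open Filter Topology Complex

section SecondDerivative

variable {𝕜 : Type*} [NontriviallyNormedField 𝕜]
  {E F G : Type*} [NormedAddCommGroup E] [NormedSpace 𝕜 E] [NormedAddCommGroup F] [NormedSpace 𝕜 F]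
  [NormedAddCommGroup G] [NormedSpace 𝕜 G]

theorem Filter.EventuallyEq.fderiv_fderiv_eq_zero {f : E → F} {x : E} {c : F}
    (h : f =ᶠ[𝓝 x] fun _ => c) : fderiv 𝕜 (fderiv 𝕜 f) x = 0 := by
  rw [h.fderiv.fderiv_eq]
  simp

theorem fderiv_fderiv_comp_apply {f : F → G} {g : E → F} {x : E}
    (hf : ContDiffAt 𝕜 2 f (g x)) (hg : ContDiffAt 𝕜 2 g x) (u v : E) :
    fderiv 𝕜 (fderiv 𝕜 (f ∘ g)) x u v =
      fderiv 𝕜 (fderiv 𝕜 f) (g x) (fderiv 𝕜 g x u) (fderiv 𝕜 g x v) +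
        fderiv 𝕜 f (g x) (fderiv 𝕜 (fderiv 𝕜 g) x u v) := by
  have hf_near : ∀ᶠ y in 𝓝 x, DifferentiableAt 𝕜 f (g y) :=
    hg.continuousAt.eventually ((hf.eventually (by simp)).mono fun _ h =>
      h.differentiableAt two_ne_zero)
  have hg_near : ∀ᶠ y in 𝓝 x, DifferentiableAt 𝕜 g y :=
    (hg.eventually (by simp)).mono fun _ h => h.differentiableAt two_ne_zero
  have hf' : DifferentiableAt 𝕜 (fderiv 𝕜 f) (g x) :=
    (hf.fderiv_right (m := 1) le_rfl).differentiableAt one_ne_zero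
  have hg' : DifferentiableAt 𝕜 (fderiv 𝕜 g) x :=
    (hg.fderiv_right (m := 1) le_rfl).differentiableAt one_ne_zero
  have hchain : fderiv 𝕜 (f ∘ g) =ᶠ[𝓝 x] fun y => (fderiv 𝕜 f (g y)).comp (fderiv 𝕜 g y) :=
    (hf_near.and hg_near).mono fun y h => fderiv_comp y h.1 h.2
  have hgx := hg.differentiableAt two_ne_zero
  rw [hchain.fderiv_eq, fderiv_clm_comp (c := fun y => fderiv 𝕜 f (g y)) (hf'.comp x hgx) hg',
    fderiv_fun_comp x hf' hgx]
  simp [add_comm]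

end SecondDerivative

section RestrictScalars

variable (𝕜 : Type*) [NontriviallyNormedField 𝕜] {𝕜' : Type*} [NontriviallyNormedField 𝕜']
  [NormedAlgebra 𝕜 𝕜'] {E F : Type*} [NormedAddCommGroup E] [NormedSpace 𝕜 E] [NormedSpace 𝕜' E]
  [IsScalarTower 𝕜 𝕜' E] [NormedAddCommGroup F] [NormedSpace 𝕜 F] [NormedSpace 𝕜' F]
  [IsScalarTower 𝕜 𝕜' F]

theorem ContDiffAt.fderiv_fderiv_restrictScalars_apply {f : E → F} {x : E}
    (hf : ContDiffAt 𝕜' 2 f x) (u v : E) :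
    fderiv 𝕜 (fderiv 𝕜 f) x u v = fderiv 𝕜' (fderiv 𝕜' f) x u v := by
  have hf' : DifferentiableAt 𝕜' (fderiv 𝕜' f) x :=
    (hf.fderiv_right (m := 1) le_rfl).differentiableAt one_ne_zero
  have hfderiv : fderiv 𝕜 f =ᶠ[𝓝 x]
      fun y => ContinuousLinearMap.restrictScalarsL 𝕜' E F 𝕜 𝕜 (fderiv 𝕜' f y) :=
    (hf.eventually (by simp)).mono fun y h =>
      (h.differentiableAt two_ne_zero).fderiv_restrictScalars 𝕜
  rw [hfderiv.fderiv_eq, fderiv_fun_comp x (ContinuousLinearMap.differentiableAt _)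
    (hf'.restrictScalars 𝕜), ContinuousLinearMap.fderiv, hf'.fderiv_restrictScalars 𝕜]
  rfl

end RestrictScalars

theorem ContinuousLinearMap.apply_I_apply_I {E : Type*} [NormedAddCommGroup E] [NormedSpace ℂ E]
    (B : ℂ →L[ℂ] ℂ →L[ℂ] E) : B I I = -B 1 1 := by
  have hB : B I = I • B 1 := by simpa using B.map_smul I 1
  have hB1 : B 1 I = I • B 1 1 := by simpa using (B 1).map_smul I 1
  rw [hB, smul_apply, hB1, smul_smul, I_mul_I, neg_one_smul]

theorem fderiv_fderiv_comp_one_one_add_I_I {E : Type*} [NormedAddCommGroup E] [NormedSpace ℂ E]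
    [CompleteSpace E] {ρ : E → ℝ} {g : ℂ → E} {z : ℂ} (hρ : ContDiffAt ℝ 2 ρ (g z)) (hg : AnalyticAt ℂ g z) :
    fderiv ℝ (fderiv ℝ (ρ ∘ g)) z 1 1 + fderiv ℝ (fderiv ℝ (ρ ∘ g)) z I I =
      fderiv ℝ (fderiv ℝ ρ) (g z) (deriv g z) (deriv g z) +
        fderiv ℝ (fderiv ℝ ρ) (g z) (I • deriv g z) (I • deriv g z) := by
  have hgC : ContDiffAt ℂ 2 g z := hg.contDiffAt.of_le le_top
  have hgR : ∀ u : ℂ, fderiv ℝ g z u = u • deriv g z := fun u => by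
    rw [(hgC.differentiableAt two_ne_zero).fderiv_restrictScalars ℝ]
    simp
  simp only [fderiv_fderiv_comp_apply hρ (hgC.restrict_scalars ℝ), hgR, one_smul,
    hgC.fderiv_fderiv_restrictScalars_apply ℝ, ContinuousLinearMap.apply_I_apply_I, map_neg]
  ring

/-- a strictly pseudoconvex hypersurface `{ρ' = 0}` contains no
complex-analytic set of positive dimension: any holomorphic map `g` from a
nonempty connected open `D ⊆ ℂ` into `{ρ' = 0}` is constant. -/
theorem strictly_pseudoconvex_no_analytic_disc
    (N : ℕ)
    (U' : Set (EuclideanSpace ℂ (Fin N))) (hU' : IsOpen U')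
    (ρ' : EuclideanSpace ℂ (Fin N) → ℝ) (hρ' : ContDiffOn ℝ 2 ρ' U')
    (hLevi : ∀ p ∈ U', ∀ v : EuclideanSpace ℂ (Fin N), v ≠ 0 →
      0 < fderiv ℝ (fderiv ℝ ρ') p v v
          + fderiv ℝ (fderiv ℝ ρ') p (Complex.I • v) (Complex.I • v))
    (D : Set ℂ) (hD : IsOpen D) (hDconn : IsConnected D)
    (g : ℂ → EuclideanSpace ℂ (Fin N)) (hg : DifferentiableOn ℂ g D)
    (hgD : g '' D ⊆ U') (hgρ : ∀ ζ ∈ D, ρ' (g ζ) = 0) :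
    ∀ ζ₁ ∈ D, ∀ ζ₂ ∈ D, g ζ₁ = g ζ₂ := by
  intro ζ₁ hζ₁ ζ₂ hζ₂
  refine hD.is_const_of_deriv_eq_zero hDconn.isPreconnected hg (fun ζ hζ => ?_) hζ₁ hζ₂
  have hgζ : g ζ ∈ U' := hgD ⟨ζ, hζ, rfl⟩
  have hflat : ρ' ∘ g =ᶠ[𝓝 ζ] fun _ => 0 := eventually_of_mem (hD.mem_nhds hζ) hgρ
  have hlaplace := fderiv_fderiv_comp_one_one_add_I_I (hρ'.contDiffAt (hU'.mem_nhds hgζ))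
    (hg.analyticAt (hD.mem_nhds hζ))
  rw [hflat.fderiv_fderiv_eq_zero] at hlaplace
  by_contra hw
  simp only [zero_apply, add_zero] at hlaplace
  exact (hLevi _ hgζ _ hw).ne hlaplace
end
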